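/- Let X and Y be nontrivial real normed spaces. The ℓ1-sum X ⊕_1 Y (the product X × Y equipped with the norm ‖(x, y)‖ = ‖x‖ + ‖y‖) is decomposably octahedral if and only if X is decomposably octahedral or Y is decomposably octahedral. -/

import Mathlib

/-- Decomposable octahedrality (DOH). -/
def DecomposablyOctahedral (X : Type*) [NormedAddCommGroup X] [NormedSpace ℝ X] : Prop :=
  ∀ E : Finset X, (∀ x ∈ E, ‖x‖ = 1) → ∀ ε : ℝ, 0 < ε → ∃ y : X, ‖y‖ = 1 ∧
    ∀ (n : ℕ) (ys : Fin n → X), ∑ i, ys i = y →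
      ∀ xs : Fin n → X, (∀ i, xs i ∈ E) →
      ∀ a b : Fin n → ℝ, (∀ i, 0 ≤ a i) → (∀ i, 0 ≤ b i) →
        (1 - ε) * ((∑ i, (a i + b i)) + 2) ≤
          ∑ i, (‖a i • xs i + ys i‖ + ‖b i • xs i - ys i‖)

/-!
If `X` is DOH, take a witness `y` for the normalised first coordinates of `E`; then `(y, 0)` is a
witness for `E` in `X ⊕₁ Y`: the first coordinates are controlled by the octahedrality of `X`
(with weights `‖xᵢ.fst‖`) and the second ones by the triangle inequality, and these weights add
up to `‖xᵢ‖ = 1`.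

Conversely, a witness `w` for `X ⊕₁ Y` has a coordinate of norm `t ≥ 1/2`, say the first one.
A decomposition of `t⁻¹ • w.fst` in `X`, scaled by `t` and with `w.snd` added to one summand,
is a decomposition of `w`; this makes `t⁻¹ • w.fst` a witness in `X` with `ε` replaced by
`ε / t ≤ 2ε`.
-/

open WithLp

section Basic

variable {X Z : Type*} [NormedAddCommGroup X] [NormedSpace ℝ X]
  [NormedAddCommGroup Z] [NormedSpace ℝ Z]

def DecomposablyOctahedralAt (E : Finset X) (ε : ℝ) (y : X) : Prop :=
  ∀ (n : ℕ) (ys : Fin n → X), ∑ i, ys i = y →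
    ∀ xs : Fin n → X, (∀ i, xs i ∈ E) →
    ∀ a b : Fin n → ℝ, (∀ i, 0 ≤ a i) → (∀ i, 0 ≤ b i) →
      (1 - ε) * ((∑ i, (a i + b i)) + 2) ≤
        ∑ i, (‖a i • xs i + ys i‖ + ‖b i • xs i - ys i‖)

theorem decomposablyOctahedral_iff :
    DecomposablyOctahedral X ↔ ∀ E : Finset X, (∀ x ∈ E, ‖x‖ = 1) → ∀ ε : ℝ, 0 < ε →
      ∃ y : X, ‖y‖ = 1 ∧ DecomposablyOctahedralAt E ε y :=
  Iff.rfl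

namespace DecomposablyOctahedralAt

variable {E : Finset X} {ε : ℝ} {y : X}

theorem mono {ε' : ℝ} (h : DecomposablyOctahedralAt E ε y) (hε : ε ≤ ε') :
    DecomposablyOctahedralAt E ε' y := by
  intro n ys hys xs hxs a b ha hb
  have hS : 0 ≤ ∑ i, (a i + b i) + 2 := by
    have := Finset.sum_nonneg fun i (_ : i ∈ Finset.univ) => add_nonneg (ha i) (hb i)
    linarith
  exact (mul_le_mul_of_nonneg_right (by linarith) hS).trans (h n ys hys xs hxs a b ha hb)

theorem map (h : DecomposablyOctahedralAt E ε y) (f : X ≃ₗᵢ[ℝ] Z) {F : Finset Z}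
    (hF : ∀ z ∈ F, f.symm z ∈ E) : DecomposablyOctahedralAt F ε (f y) := by
  intro n ys hys xs hxs a b ha hb
  have := h n (f.symm ∘ ys) (by simp [← map_sum, hys]) (f.symm ∘ xs) (fun i => hF _ (hxs i))
    a b ha hb
  simpa [← map_smul, ← map_add, ← map_sub] using this

theorem le_of_normalize_mem (h : DecomposablyOctahedralAt E ε y) (hE : E.Nonempty) {n : ℕ}
    {ys : Fin n → X} (hys : ∑ i, ys i = y) {xs : Fin n → X}
    (hxs : ∀ i, xs i ≠ 0 → ‖xs i‖⁻¹ • xs i ∈ E) {a b : Fin n → ℝ} (ha : ∀ i, 0 ≤ a i)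
    (hb : ∀ i, 0 ≤ b i) :
    (1 - ε) * ((∑ i, (a i + b i) * ‖xs i‖) + 2) ≤
      ∑ i, (‖a i • xs i + ys i‖ + ‖b i • xs i - ys i‖) := by
  classical
  obtain ⟨e, he⟩ := hE
  let xs' i := if xs i = 0 then e else ‖xs i‖⁻¹ • xs i
  have hsmul (c : ℝ) (i : Fin n) : (c * ‖xs i‖) • xs' i = c • xs i := by
    by_cases h0 : xs i = 0
    · simp [h0]
    · simp [xs', h0, smul_smul]
  have hxs' (i : Fin n) : xs' i ∈ E := by
    by_cases h0 : xs i = 0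
    · simpa [xs', h0] using he
    · simpa [xs', h0] using hxs i h0
  have := h n ys hys xs' hxs' (fun i => a i * ‖xs i‖) (fun i => b i * ‖xs i‖)
    (fun i => mul_nonneg (ha i) (norm_nonneg _)) (fun i => mul_nonneg (hb i) (norm_nonneg _))
  simpa only [hsmul, add_mul] using this

end DecomposablyOctahedralAt

theorem DecomposablyOctahedral.exists_norm_eq_one (h : DecomposablyOctahedral X) :
    ∃ e : X, ‖e‖ = 1 := by
  obtain ⟨e, he, -⟩ := h ∅ (by simp) 1 one_pos
  exact ⟨e, he⟩

theorem DecomposablyOctahedral.map (h : DecomposablyOctahedral X) (f : X ≃ₗᵢ[ℝ] Z) :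
    DecomposablyOctahedral Z := by
  classical
  intro F hF ε hε
  obtain ⟨y, hy, hyE⟩ := (decomposablyOctahedral_iff.mp h) (F.image f.symm) (by simpa using hF)
    ε hε
  exact ⟨f y, by simpa using hy, hyE.map f fun z hz => Finset.mem_image_of_mem _ hz⟩

end Basic

section L1Sum

variable {X Y : Type*} [NormedAddCommGroup X] [NormedSpace ℝ X]
  [NormedAddCommGroup Y] [NormedSpace ℝ Y]

theorem add_mul_norm_le_norm_smul_add_add_norm_smul_sub {a b : ℝ} (ha : 0 ≤ a) (hb : 0 ≤ b)
    (x z : X) : (a + b) * ‖x‖ ≤ ‖a • x + z‖ + ‖b • x - z‖ :=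
  calc (a + b) * ‖x‖ = ‖(a • x + z) + (b • x - z)‖ := by
        rw [show (a • x + z) + (b • x - z) = (a + b) • x by module, norm_smul,
          Real.norm_of_nonneg (add_nonneg ha hb)]
    _ ≤ ‖a • x + z‖ + ‖b • x - z‖ := norm_add_le _ _

theorem DecomposablyOctahedralAt.withLp_prod_left {E : Finset X} {ε : ℝ} {y : X}
    (h : DecomposablyOctahedralAt E ε y) (hε : 0 ≤ ε) (hE : E.Nonempty)
    {F : Finset (WithLp 1 (X × Y))} (hF : ∀ z ∈ F, ‖z‖ = 1)
    (hFE : ∀ z ∈ F, z.fst ≠ 0 → ‖z.fst‖⁻¹ • z.fst ∈ E) :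
    DecomposablyOctahedralAt F ε (toLp 1 (y, 0)) := by
  intro n ys hys xs hxs a b ha hb
  have hX := h.le_of_normalize_mem hE (ys := fun i => (ys i).fst)
    (by simpa [map_sum] using congrArg (fstₗ 1 ℝ X Y) hys) (xs := fun i => (xs i).fst)
    (fun i => hFE _ (hxs i)) ha hb
  have hY : ∑ i, (a i + b i) * ‖(xs i).snd‖ ≤
      ∑ i, (‖a i • (xs i).snd + (ys i).snd‖ + ‖b i • (xs i).snd - (ys i).snd‖) :=
    Finset.sum_le_sum fun i _ => add_mul_norm_le_norm_smul_add_add_norm_smul_sub (ha i) (hb i) _ _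
  have hsplit : ∑ i, (a i + b i) =
      ∑ i, (a i + b i) * ‖(xs i).fst‖ + ∑ i, (a i + b i) * ‖(xs i).snd‖ := by
    simp only [← Finset.sum_add_distrib, ← mul_add, ← prod_norm_eq_of_L1, hF _ (hxs _), mul_one]
  have hnorm : ∑ i, (‖a i • xs i + ys i‖ + ‖b i • xs i - ys i‖) =
      ∑ i, (‖a i • (xs i).fst + (ys i).fst‖ + ‖b i • (xs i).fst - (ys i).fst‖) +
      ∑ i, (‖a i • (xs i).snd + (ys i).snd‖ + ‖b i • (xs i).snd - (ys i).snd‖) := by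
    rw [← Finset.sum_add_distrib]
    refine Finset.sum_congr rfl fun i _ => ?_
    simp only [prod_norm_eq_of_L1, add_fst, add_snd, sub_fst, sub_snd, smul_fst, smul_snd]
    ring
  have hSY : 0 ≤ ∑ i, (a i + b i) * ‖(xs i).snd‖ :=
    Finset.sum_nonneg fun i _ => mul_nonneg (add_nonneg (ha i) (hb i)) (norm_nonneg _)
  rw [hnorm, hsplit]
  linarith [mul_nonneg hε hSY]

theorem DecomposablyOctahedral.withLp_prod_left (h : DecomposablyOctahedral X) :
    DecomposablyOctahedral (WithLp 1 (X × Y)) := by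
  classical
  obtain ⟨e, he⟩ := h.exists_norm_eq_one
  intro F hF ε hε
  let E := (insert e (F.image fun z => ‖z.fst‖⁻¹ • z.fst)).filter (‖·‖ = 1)
  obtain ⟨y, hy, hyE⟩ := decomposablyOctahedral_iff.mp h E (by simp [E]) ε hε
  refine ⟨toLp 1 (y, 0), by simp [hy],
    hyE.withLp_prod_left hε.le ⟨e, by simp [E, he]⟩ hF fun z hz hz0 =>
      Finset.mem_filter.mpr ⟨Finset.mem_insert_of_mem (Finset.mem_image_of_mem _ hz),
        norm_smul_inv_norm hz0⟩⟩

theorem DecomposablyOctahedral.withLp_prod_right (h : DecomposablyOctahedral Y) :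
    DecomposablyOctahedral (WithLp 1 (X × Y)) :=
  h.withLp_prod_left.map (LinearIsometryEquiv.withLpProdComm 1 ℝ Y X)

namespace DecomposablyOctahedralAt

variable {F : Finset (WithLp 1 (X × Y))} {ε : ℝ} {w : WithLp 1 (X × Y)}

theorem withLp_prod_fst (h : DecomposablyOctahedralAt F ε w) (hε : 0 ≤ ε) (hw : ‖w‖ ≤ 1)
    (hw0 : w.fst ≠ 0) {E : Finset X} (hEF : ∀ x ∈ E, toLp 1 (x, 0) ∈ F) :
    DecomposablyOctahedralAt E (ε / ‖w.fst‖) (‖w.fst‖⁻¹ • w.fst) := by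
  classical
  intro n ys hys xs hxs a b ha hb
  set t := ‖w.fst‖
  have ht0 : 0 < t := norm_pos_iff.mpr hw0
  have hsnd : ‖w.snd‖ ≤ 1 - t := by rw [prod_norm_eq_of_L1] at hw; linarith
  obtain ⟨i₀⟩ : Nonempty (Fin n) := by
    rcases n with _ | n
    · simp only [Finset.univ_eq_empty, Finset.sum_empty] at hys
      exact absurd hys.symm (smul_ne_zero (inv_ne_zero ht0.ne') hw0)
    · exact ⟨0⟩
  -- `w.snd` is put into a single summand of the decomposition of `w`.
  let zs i : Y := if i = i₀ then w.snd else 0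
  have hzs : ∑ i, ‖zs i‖ = ‖w.snd‖ := by simp [zs, apply_ite]
  have key := h n (fun i => toLp 1 (t • ys i, zs i)) ?_ (fun i => toLp 1 (xs i, 0))
    (fun i => hEF _ (hxs i)) (fun i => t * a i) (fun i => t * b i)
    (fun i => mul_nonneg ht0.le (ha i)) (fun i => mul_nonneg ht0.le (hb i))
  · have hS : 0 ≤ ∑ i, (a i + b i) := Finset.sum_nonneg fun i _ => add_nonneg (ha i) (hb i)
    have hsum : ∑ i, (t * a i + t * b i) = t * ∑ i, (a i + b i) := by
      simp only [Finset.mul_sum, mul_add]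
    have hnorm : ∑ i, (‖(t * a i) • toLp 1 (xs i, (0 : Y)) + toLp 1 (t • ys i, zs i)‖ +
        ‖(t * b i) • toLp 1 (xs i, (0 : Y)) - toLp 1 (t • ys i, zs i)‖) =
        t * ∑ i, (‖a i • xs i + ys i‖ + ‖b i • xs i - ys i‖) + 2 * ‖w.snd‖ := by
      rw [← hzs, Finset.mul_sum, Finset.mul_sum, ← Finset.sum_add_distrib]
      refine Finset.sum_congr rfl fun i _ => ?_
      simp only [prod_norm_eq_of_L1, add_fst, add_snd, sub_fst, sub_snd, smul_fst, smul_snd,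
        toLp_fst, toLp_snd, smul_zero, zero_add, zero_sub, norm_neg, mul_smul, ← smul_add,
        ← smul_sub, norm_smul, Real.norm_of_nonneg ht0.le]
      ring
    rw [hsum, hnorm] at key
    rw [← mul_le_mul_iff_of_pos_left ht0,
      show t * ((1 - ε / t) * (∑ i, (a i + b i) + 2)) = (t - ε) * (∑ i, (a i + b i) + 2) by
        field_simp]
    linarith [mul_nonneg (mul_nonneg hε hS) (show 0 ≤ 1 - t by linarith [norm_nonneg w.snd])]
  · rw [← toLp_sum, ← toLp_ofLp (p := 1) w]
    congr 1
    ext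
    · simp [Prod.fst_sum, ← Finset.smul_sum, hys, ht0.ne']
    · simp [zs, Prod.snd_sum]

theorem withLp_prod_snd (h : DecomposablyOctahedralAt F ε w) (hε : 0 ≤ ε) (hw : ‖w‖ ≤ 1)
    (hw0 : w.snd ≠ 0) {E : Finset Y} (hEF : ∀ y ∈ E, toLp 1 (0, y) ∈ F) :
    DecomposablyOctahedralAt E (ε / ‖w.snd‖) (‖w.snd‖⁻¹ • w.snd) := by
  classical
  let σ := LinearIsometryEquiv.withLpProdComm 1 ℝ X Y
  simpa [σ] using (h.map σ (F := F.image σ) (by simp)).withLp_prod_fst hε (by simpa using hw)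
    (by simpa [σ] using hw0) fun y hy => Finset.mem_image.mpr ⟨_, hEF y hy, rfl⟩

end DecomposablyOctahedralAt

theorem DecomposablyOctahedral.of_withLp_prod (h : DecomposablyOctahedral (WithLp 1 (X × Y))) :
    DecomposablyOctahedral X ∨ DecomposablyOctahedral Y := by
  classical
  by_contra! ⟨hX, hY⟩
  simp only [decomposablyOctahedral_iff, not_forall, not_exists, not_and] at hX hY
  obtain ⟨EX, hEX, εX, hεX, hXv⟩ := hX
  obtain ⟨EY, hEY, εY, hεY, hYv⟩ := hY
  let F := EX.image (fun x => toLp 1 (x, (0 : Y))) ∪ EY.image (fun y => toLp 1 ((0 : X), y))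
  have hF : ∀ z ∈ F, ‖z‖ = 1 := by
    simp only [F, Finset.mem_union, Finset.mem_image]
    rintro z (⟨x, hx, rfl⟩ | ⟨y, hy, rfl⟩)
    · simpa [prod_norm_eq_of_L1] using hEX x hx
    · simpa [prod_norm_eq_of_L1] using hEY y hy
  set ε := min εX εY / 2 with hε_def
  have hε : 0 < ε := by positivity
  obtain ⟨w, hw, hwF⟩ := decomposablyOctahedral_iff.mp h F hF ε hε
  have hw' : ‖w.fst‖ + ‖w.snd‖ = 1 := by rw [← prod_norm_eq_of_L1, hw]
  rcases le_total (1 / 2) ‖w.fst‖ with ht | ht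
  · have hw0 : w.fst ≠ 0 := norm_pos_iff.mp (by linarith)
    refine hXv _ (norm_smul_inv_norm hw0) ((hwF.withLp_prod_fst hε.le hw.le hw0 ?_).mono ?_)
    · exact fun x hx => Finset.mem_union_left _ (Finset.mem_image_of_mem _ hx)
    · rw [div_le_iff₀ (by linarith)]
      linarith [min_le_left εX εY, mul_le_mul_of_nonneg_left ht hεX.le]
  · replace ht : 1 / 2 ≤ ‖w.snd‖ := by linarith
    have hw0 : w.snd ≠ 0 := norm_pos_iff.mp (by linarith)
    refine hYv _ (norm_smul_inv_norm hw0) ((hwF.withLp_prod_snd hε.le hw.le hw0 ?_).mono ?_)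
    · exact fun y hy => Finset.mem_union_right _ (Finset.mem_image_of_mem _ hy)
    · rw [div_le_iff₀ (by linarith)]
      linarith [min_le_right εX εY, mul_le_mul_of_nonneg_left ht hεY.le]

end L1Sum

theorem doh_l1_sum_iff_general (X Y : Type*) [NormedAddCommGroup X] [NormedSpace ℝ X]
    [NormedAddCommGroup Y] [NormedSpace ℝ Y] :
    DecomposablyOctahedral (WithLp 1 (X × Y)) ↔
      DecomposablyOctahedral X ∨ DecomposablyOctahedral Y :=
  ⟨DecomposablyOctahedral.of_withLp_prod, fun h => h.elim
    DecomposablyOctahedral.withLp_prod_left DecomposablyOctahedral.withLp_prod_right⟩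

/-- For nontrivial spaces, the ℓ₁-sum `X ⊕₁ Y` (with norm `‖(x, y)‖ = ‖x‖ + ‖y‖`) is DOH
if and only if `X` is DOH or `Y` is DOH. -/
theorem doh_l1_sum_iff (X Y : Type*) [NormedAddCommGroup X] [NormedSpace ℝ X]
    [NormedAddCommGroup Y] [NormedSpace ℝ Y] [Nontrivial X] [Nontrivial Y] :
    DecomposablyOctahedral (WithLp 1 (X × Y)) ↔
      DecomposablyOctahedral X ∨ DecomposablyOctahedral Y :=
  doh_l1_sum_iff_general X Y
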